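/- arXiv:2111.06937 — 2 statements merged into one kernel-verified Lean document; each statement's English description precedes it below -/
import Mathlib

section
/- Let K = Q(√5) with ring of integers O = Z[φ], φ = (1+√5)/2, and let σ be the nontrivial automorphism of K. For every nonzero non-unit x ∈ O with |x| ≥ |σ(x)|, there exists a unit u ∈ O^× with |u| ≤ |x| and |σ(u)| < |σ(x)|. -/
/-- The ring of integers `ℤ[φ]` of `ℚ(√5)`, realised inside `ℝ × ℝ` via the pair of
real embeddings: an element `x` is represented as `(x, σ(x))`. -/
noncomputable def Zphi : Subring (ℝ × ℝ) :=
  Subring.closure {((1 + Real.sqrt 5) / 2, (1 - Real.sqrt 5) / 2)}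

namespace ZphiAux

noncomputable def φ₁ : ℝ := (1 + Real.sqrt 5) / 2
noncomputable def φ₂ : ℝ := (1 - Real.sqrt 5) / 2

lemma hs : Real.sqrt 5 ^ 2 = 5 := Real.sq_sqrt (by norm_num)

lemma sqrt5_lt : Real.sqrt 5 < 3 := by
  rw [show (3:ℝ) = Real.sqrt 9 by rw [show (9:ℝ) = 3^2 by norm_num, Real.sqrt_sq]; norm_num]
  exact Real.sqrt_lt_sqrt (by norm_num) (by norm_num)

lemma sqrt5_gt : 2 < Real.sqrt 5 := by
  rw [show (2:ℝ) = Real.sqrt 4 by rw [show (4:ℝ) = 2^2 by norm_num, Real.sqrt_sq]; norm_num]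
  exact Real.sqrt_lt_sqrt (by norm_num) (by norm_num)

lemma φ₁_gt : 1 < φ₁ := by unfold φ₁; nlinarith [sqrt5_gt]
lemma φ₁_lt : φ₁ < 2 := by unfold φ₁; nlinarith [sqrt5_lt]
lemma φ₁_pos : 0 < φ₁ := lt_trans one_pos φ₁_gt
lemma mul_eq : φ₁ * φ₂ = -1 := by unfold φ₁ φ₂; nlinarith [hs]
lemma add_eq : φ₁ + φ₂ = 1 := by unfold φ₁ φ₂; ring
lemma abs_φ₂ : |φ₂| = φ₁⁻¹ := by
  have h : φ₂ = -φ₁⁻¹ := by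
    have h0 : φ₁ ≠ 0 := ne_of_gt φ₁_pos
    field_simp
    linear_combination mul_eq
  rw [h, abs_neg, abs_inv, abs_of_pos φ₁_pos]

lemma mem_iff (x : ℝ × ℝ) :
    x ∈ Zphi ↔ ∃ a b : ℤ, x = ((a : ℝ) + b * φ₁, (a : ℝ) + b * φ₂) := by
  constructor
  · intro hx
    refine Subring.closure_induction ?_ ?_ ?_ ?_ ?_ ?_ hx
    · rintro p hp
      rcases Set.mem_singleton_iff.mp hp with rfl
      exact ⟨0, 1, by simp [φ₁, φ₂]⟩
    · exact ⟨0, 0, by simp [Prod.ext_iff]⟩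
    · exact ⟨1, 0, by simp [Prod.ext_iff]⟩
    · rintro p q - - ⟨a, b, rfl⟩ ⟨c, d, rfl⟩
      exact ⟨a + c, b + d, by simp [Prod.ext_iff]; push_cast; constructor <;> ring⟩
    · rintro p - ⟨a, b, rfl⟩
      exact ⟨-a, -b, by simp [Prod.ext_iff]; push_cast; constructor <;> ring⟩
    · rintro p q - - ⟨a, b, rfl⟩ ⟨c, d, rfl⟩
      refine ⟨a * c + b * d, a * d + b * c + b * d, ?_⟩
      have h1 : φ₁ ^ 2 = φ₁ + 1 := by unfold φ₁; nlinarith [hs]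
      have h2 : φ₂ ^ 2 = φ₂ + 1 := by unfold φ₂; nlinarith [hs]
      simp only [Prod.mk_mul_mk, Prod.ext_iff]
      push_cast
      constructor
      · linear_combination (b * d : ℝ) * h1
      · linear_combination (b * d : ℝ) * h2
  · rintro ⟨a, b, rfl⟩
    have hφ : ((1 + Real.sqrt 5) / 2, (1 - Real.sqrt 5) / 2) ∈ Zphi :=
      Subring.subset_closure rfl
    have : (((a : ℝ), (a : ℝ)) : ℝ × ℝ) + ((b : ℝ), (b : ℝ)) *
        ((1 + Real.sqrt 5) / 2, (1 - Real.sqrt 5) / 2) ∈ Zphi := by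
      refine Subring.add_mem _ ?_ (Subring.mul_mem _ ?_ hφ)
      · exact_mod_cast intCast_mem Zphi a
      · exact_mod_cast intCast_mem Zphi b
    simpa [φ₁, φ₂, Prod.ext_iff] using this

lemma irr {a b : ℤ} (h : (a : ℝ) + b * φ₁ = 0) : a = 0 ∧ b = 0 := by
  have h5 : Irrational (Real.sqrt 5) := by
    simpa using (by norm_num : Nat.Prime 5).irrational_sqrt
  by_cases hb : b = 0
  · subst hb; simp at h; exact ⟨by exact_mod_cast h, rfl⟩
  · exfalso
    have hbR : (b : ℝ) ≠ 0 := Int.cast_ne_zero.mpr hb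
    have : Real.sqrt 5 = ((((-2 * a - b : ℤ) : ℚ) / (b : ℚ) : ℚ) : ℝ) := by
      push_cast
      unfold φ₁ at h
      field_simp at h ⊢
      linarith
    exact h5 ⟨_, this.symm⟩

end ZphiAux

namespace ZphiAux2
open ZphiAux

/-- φ as an element of Zphi. -/
noncomputable def Φ : Zphi := ⟨(φ₁, φ₂), Subring.subset_closure rfl⟩

lemma Φ_mul : Φ * (Φ - 1) = 1 := by
  apply Subtype.ext
  show ((φ₁, φ₂) : ℝ × ℝ) * ((φ₁, φ₂) - 1) = 1
  have h1 : φ₁ ^ 2 = φ₁ + 1 := by unfold φ₁; nlinarith [hs]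
  have h2 : φ₂ ^ 2 = φ₂ + 1 := by unfold φ₂; nlinarith [hs]
  simp only [Prod.ext_iff, Prod.fst_mul, Prod.snd_mul, Prod.fst_sub, Prod.snd_sub,
    Prod.fst_one, Prod.snd_one]
  constructor <;> [linear_combination h1; linear_combination h2]

noncomputable def U : Zphiˣ :=
  ⟨Φ, Φ - 1, Φ_mul, by rw [mul_comm]; exact Φ_mul⟩

lemma pow_units (n : ℤ) :
    ∃ u : Zphi, IsUnit u ∧ ((u : ℝ × ℝ).1 = φ₁ ^ n) ∧ ((u : ℝ × ℝ).2 = φ₂ ^ n) := by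
  have key : ∀ g : Zphi →+* ℝ, g (((U ^ n : Zphiˣ) : Zphi)) = (g Φ) ^ n := by
    intro g
    calc g (((U ^ n : Zphiˣ) : Zphi))
        = ((Units.map (g : Zphi →* ℝ) (U ^ n) : ℝˣ) : ℝ) := (Units.coe_map _ _).symm
      _ = (((Units.map (g : Zphi →* ℝ) U) ^ n : ℝˣ) : ℝ) := by rw [map_zpow]
      _ = ((Units.map (g : Zphi →* ℝ) U : ℝˣ) : ℝ) ^ n := Units.val_zpow_eq_zpow_val _ _
      _ = (g Φ) ^ n := by rw [Units.coe_map]; rfl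
  refine ⟨((U ^ n : Zphiˣ) : Zphi), (U ^ n).isUnit, ?_, ?_⟩
  · exact key ((RingHom.fst ℝ ℝ).comp (Subring.subtype Zphi))
  · exact key ((RingHom.snd ℝ ℝ).comp (Subring.subtype Zphi))

end ZphiAux2

open ZphiAux ZphiAux2 in
/-- For every nonzero non-unit `x ∈ ℤ[φ]` with `|x| ≥ |σ(x)|` there is a unit `u`
with `|u| ≤ |x|` and `|σ(u)| < |σ(x)|`. -/
theorem sqrt5_unit_step (x : Zphi) (hx : x ≠ 0) (hxu : ¬ IsUnit x)
    (hord : |(x : ℝ × ℝ).2| ≤ |(x : ℝ × ℝ).1|) :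
    ∃ u : Zphi, IsUnit u ∧ |(u : ℝ × ℝ).1| ≤ |(x : ℝ × ℝ).1| ∧
      |(u : ℝ × ℝ).2| < |(x : ℝ × ℝ).2| := by
  obtain ⟨a, b, hab⟩ := (mem_iff (x : ℝ × ℝ)).mp x.2
  have h1 : φ₁ ^ 2 = φ₁ + 1 := by unfold φ₁; nlinarith [hs]
  have h2 : φ₂ ^ 2 = φ₂ + 1 := by unfold φ₂; nlinarith [hs]
  have hx1 : ((x : ℝ × ℝ)).1 = (a : ℝ) + b * φ₁ := by rw [hab]
  have hx2 : ((x : ℝ × ℝ)).2 = (a : ℝ) + b * φ₂ := by rw [hab]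
  have hab0 : ¬ (a = 0 ∧ b = 0) := by
    rintro ⟨rfl, rfl⟩
    exact hx (Subtype.ext (by rw [hab]; simp))
  have hφ₂eq : φ₂ = 1 - φ₁ := by linarith [add_eq]
  have hx1ne : ((x : ℝ × ℝ)).1 ≠ 0 := by
    rw [hx1]; intro h; exact hab0 (irr h)
  have hx2ne : ((x : ℝ × ℝ)).2 ≠ 0 := by
    rw [hx2, hφ₂eq]; intro h
    have h' : ((a + b : ℤ) : ℝ) + ((-b : ℤ) : ℝ) * φ₁ = 0 := by push_cast; linarith
    obtain ⟨hab', hb'⟩ := irr h'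
    exact hab0 ⟨by omega, by omega⟩
  set N : ℤ := a ^ 2 + a * b - b ^ 2 with hNdef
  have hNr : ((x : ℝ × ℝ)).1 * ((x : ℝ × ℝ)).2 = (N : ℝ) := by
    rw [hx1, hx2, hNdef]; push_cast
    linear_combination ((a : ℝ) * b) * add_eq + ((b : ℝ) ^ 2) * mul_eq
  have hN0 : N ≠ 0 := by
    intro h
    rw [h] at hNr
    exact (mul_ne_zero hx1ne hx2ne) (by exact_mod_cast hNr)
  have hN1 : ¬ (N = 1 ∨ N = -1) := by
    rintro (h | h) <;> rw [hNdef] at h <;>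
    [ (have hc : (a : ℝ) ^ 2 + a * b - b ^ 2 = 1 := by exact_mod_cast h);
      (have hc : (a : ℝ) ^ 2 + a * b - b ^ 2 = -1 := by exact_mod_cast h)]
    · refine hxu (IsUnit.of_mul_eq_one (a := x)
        ⟨(((a + b : ℤ) : ℝ) + ((-b : ℤ) : ℝ) * φ₁, ((a + b : ℤ) : ℝ) + ((-b : ℤ) : ℝ) * φ₂),
          (mem_iff _).mpr ⟨a + b, -b, rfl⟩⟩ ?_)
      apply Subtype.ext
      show ((x : ℝ × ℝ)) * _ = 1
      have e1 : ((x : ℝ × ℝ) * (((a + b : ℤ) : ℝ) + ((-b : ℤ) : ℝ) * φ₁,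
          ((a + b : ℤ) : ℝ) + ((-b : ℤ) : ℝ) * φ₂)).1
          = ((a : ℝ) + b * φ₁) * (((a : ℝ) + b) + (-(b : ℝ)) * φ₁) := by
        rw [Prod.fst_mul, hx1]; push_cast; ring
      refine Prod.ext ?_ ?_
      · rw [e1]; show _ = 1
        linear_combination hc - (b : ℝ) ^ 2 * h1
      · rw [Prod.snd_mul, hx2]; show _ = 1; push_cast
        linear_combination hc - (b : ℝ) ^ 2 * h2
    · refine hxu (IsUnit.of_mul_eq_one (a := x)
        ⟨(((-(a + b) : ℤ) : ℝ) + ((b : ℤ) : ℝ) * φ₁, ((-(a + b) : ℤ) : ℝ) + ((b : ℤ) : ℝ) * φ₂),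
          (mem_iff _).mpr ⟨-(a + b), b, rfl⟩⟩ ?_)
      apply Subtype.ext
      show ((x : ℝ × ℝ)) * _ = 1
      refine Prod.ext ?_ ?_
      · rw [Prod.fst_mul, hx1]; show _ = 1; push_cast
        linear_combination -hc + (b : ℝ) ^ 2 * h1
      · rw [Prod.snd_mul, hx2]; show _ = 1; push_cast
        linear_combination -hc + (b : ℝ) ^ 2 * h2
  have hNabs : (2 : ℤ) ≤ |N| := by
    rw [Int.abs_eq_natAbs]
    rcases hN1' : N with _ | _ <;> omega
  set X := |(x : ℝ × ℝ).1| with hX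
  set Y := |(x : ℝ × ℝ).2| with hY
  have hXpos : 0 < X := abs_pos.mpr hx1ne
  have hYpos : 0 < Y := abs_pos.mpr hx2ne
  have hXY : (2 : ℝ) ≤ X * Y := by
    rw [hX, hY, ← abs_mul, hNr]
    calc (2 : ℝ) = ((2 : ℤ) : ℝ) := by norm_num
    _ ≤ ((|N| : ℤ) : ℝ) := by exact_mod_cast hNabs
    _ = |(N : ℝ)| := by push_cast; simp
  set n : ℤ := ⌊Real.logb φ₁ X⌋ with hn
  obtain ⟨u, hu, hu1, hu2⟩ := pow_units n
  have hφne1 : φ₁ ≠ 1 := ne_of_gt φ₁_gt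
  have hrlog : φ₁ ^ (Real.logb φ₁ X) = X := Real.rpow_logb φ₁_pos hφne1 hXpos
  have hle : φ₁ ^ n ≤ X := by
    calc φ₁ ^ n = φ₁ ^ ((n : ℝ)) := (Real.rpow_intCast φ₁ n).symm
    _ ≤ φ₁ ^ (Real.logb φ₁ X) :=
        Real.rpow_le_rpow_of_exponent_le φ₁_gt.le (Int.floor_le _)
    _ = X := hrlog
  have hlt : X < φ₁ ^ (n + 1) := by
    calc X = φ₁ ^ (Real.logb φ₁ X) := hrlog.symm
    _ < φ₁ ^ (((n + 1 : ℤ) : ℝ)) := by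
        apply Real.rpow_lt_rpow_of_exponent_lt φ₁_gt
        push_cast
        exact Int.lt_floor_add_one _
    _ = φ₁ ^ (n + 1) := Real.rpow_intCast φ₁ (n + 1)
  have htpos : (0 : ℝ) < φ₁ ^ n := zpow_pos φ₁_pos n
  have hkey : 1 < Y * φ₁ ^ n := by
    have hsplit : φ₁ ^ (n + 1) = φ₁ ^ n * φ₁ := by
      rw [zpow_add_one₀ (ne_of_gt φ₁_pos)]
    rw [hsplit] at hlt
    have hYlt : Y * X < Y * (φ₁ ^ n * φ₁) := by
      exact mul_lt_mul_of_pos_left hlt hYpos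
    nlinarith [φ₁_lt, φ₁_pos, hXY, hYlt, htpos, hYpos]
  refine ⟨u, hu, ?_, ?_⟩
  · rw [hu1, abs_of_pos htpos]; exact hle
  · rw [hu2, show |φ₂ ^ n| = |φ₂| ^ n from map_zpow₀ (absHom : ℝ →*₀ ℝ) φ₂ n, abs_φ₂]
    have : (φ₁ ^ n)⁻¹ < Y := by
      rw [inv_eq_one_div, div_lt_iff₀ htpos]
      linarith [hkey]
    calc φ₁⁻¹ ^ n = (φ₁ ^ n)⁻¹ := by rw [inv_zpow]
    _ < Y := this
end

section
/- Let Λ be an HKZ-reduced lattice of dimension d over a right-Euclidean order O of a division algebra K, with basis {b_1,...,b_d} and successive minima λ_1,...,λ_d with respect to q_α. Then for all 1 ≤ k ≤ d, q_α(φ(b_k)) ≤ (1 + (k-1)ρ_{α,O}) λ_k^2. -/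
/-- `b` is a basis of the `O`-lattice `Λ` inside `K^D`. -/
def IsLatticeBasis {K : Type*} [DivisionRing K] (O : Subring K) {D d : ℕ}
    (Λ : Submodule O (Fin D → K)) (b : Fin d → (Fin D → K)) : Prop :=
  Submodule.span O (Set.range b) = Λ ∧ LinearIndependent O b

/-- `O` is right-Euclidean. -/
def RightEuclidean {K : Type*} [DivisionRing K] (O : Subring K) : Prop :=
  ∃ φ : O → ℕ, ∀ a b : O, b ≠ 0 → ∃ q r : O, a = q * b + r ∧ (r = 0 ∨ φ r < φ b)

/-- `lam i` is the `(i+1)`-st successive minimum of `Λ` with respect to `√q`. -/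
def IsSuccMinima {K : Type*} [DivisionRing K] (O : Subring K) {D d : ℕ}
    (q : (Fin D → K) → ℝ) (Λ : Submodule O (Fin D → K)) (lam : Fin d → ℝ) : Prop :=
  ∀ i : Fin d, 0 ≤ lam i ∧
    (∃ s : Fin (i + 1) → (Fin D → K), LinearIndependent K s ∧ (∀ j, s j ∈ Λ) ∧
      ∀ j, q (s j) ≤ lam i ^ 2) ∧
    (∀ s : Fin (i + 1) → (Fin D → K), LinearIndependent K s → (∀ j, s j ∈ Λ) →
      ∃ j, lam i ^ 2 ≤ q (s j))

/-- Bound on the vectors of an HKZ-reduced basis of an algebraic lattice in terms of the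
successive minima.  Here `A = K_ℝ`, `φ : K → A` is the canonical map, `qS` is the scalar
quadratic norm `a ↦ tr(a·α·a*)` on `A`, `qV` the induced quadratic norm on `A^D`,
`g k = b_k(k)` are the Gram–Schmidt vectors and `μ` the Gram–Schmidt coefficients;
`ρ` is the covering constant `ρ_{α,O}`.  If the basis is HKZ reduced (`hproj`: each
`g k` minimises `qV` over the projected lattice; `hμred`: the coefficients `μ k i` are
reduced modulo `O`), then `qV(φ(b k)) ≤ (1 + (k-1)·ρ)·λ_k²` for all `k`. -/
theorem hkz_reduced_basis_bound
    {K : Type*} [DivisionRing K] (O : Subring K) (hO : RightEuclidean O)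
    {D d : ℕ} (hd : 0 < d) (hdD : d ≤ D)
    {A : Type*} [Ring A] (φ : K →+* A)
    (qS : A → ℝ) (qV : (Fin D → A) → ℝ)
    (hqS0 : ∀ a, 0 ≤ qS a) (hqV0 : ∀ v, 0 ≤ qV v)
    (hsubmul : ∀ (a : A) (v : Fin D → A), qV (fun j => a * v j) ≤ qS a * qV v)
    -- the covering constant ρ_{α,O}
    (ρ : ℝ) (hρ : ∀ a : A, ∃ y : O, qS (a - φ y) ≤ ρ)
    -- lattice, basis and Gram–Schmidt data
    (Λ : Submodule O (Fin D → K)) (b : Fin d → (Fin D → K))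
    (hb : IsLatticeBasis O Λ b) (hbK : LinearIndependent K b)
    (g : Fin d → (Fin D → A)) (μ : Fin d → Fin d → A)
    (hdecomp : ∀ k : Fin d, (fun j => φ (b k j)) =
      fun j => g k j + ∑ i ∈ Finset.univ.filter (· < k), μ k i * g i j)
    (hpythagoras : ∀ c : Fin d → A,
      qV (fun j => ∑ i, c i * g i j) = ∑ i, qV (fun j => c i * g i j))
    -- HKZ reduction conditions
    (hproj : ∀ (k : Fin d) (x : Fin d → O), (∃ i, k ≤ i ∧ x i ≠ 0) →
      qV (g k) ≤ qV (fun j => ∑ i ∈ Finset.univ.filter (k ≤ ·), φ (x i) * g i j))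
    (hμred : ∀ (k i : Fin d), i < k → ∀ y : O, qS (μ k i) ≤ qS (μ k i - φ y))
    -- successive minima
    (lam : Fin d → ℝ)
    (hlam : IsSuccMinima O (fun v : Fin D → K => qV (fun j => φ (v j))) Λ lam) :
    ∀ k : Fin d, qV (fun j => φ (b k j)) ≤ (1 + (k : ℝ) * ρ) * lam k ^ 2 := by
  classical
  obtain ⟨hspan, hbO⟩ := hb
  have hρ0 : 0 ≤ ρ := by
    obtain ⟨y, hy⟩ := hρ 0
    exact (hqS0 _).trans hy
  -- cardinality of the set of indices below `k`
  have hkcard : ∀ k : Fin d, (Finset.univ.filter (fun m : Fin d => m < k)).card = (k : ℕ) := by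
    intro k
    rw [← Finset.card_range (k : ℕ), ← Finset.card_image_of_injective _ Fin.val_injective]
    congr 1
    ext n
    simp only [Finset.mem_image, Finset.mem_filter, Finset.mem_univ, true_and, Finset.mem_range,
      Fin.lt_iff_val_lt_val]
    constructor
    · rintro ⟨m, hm, rfl⟩; exact hm
    · intro hn; exact ⟨⟨n, lt_trans hn k.isLt⟩, hn, rfl⟩
  -- interchanging a triangular double sum
  have hswap : ∀ F : Fin d → Fin d → A,
      ∑ m, ∑ i ∈ Finset.univ.filter (· < m), F m i
        = ∑ i, ∑ m ∈ Finset.univ.filter (i < ·), F m i := by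
    intro F
    simp only [Finset.sum_filter]
    exact Finset.sum_comm
  -- Gram–Schmidt coordinates of an O-combination of the basis vectors
  have hcoord : ∀ x : Fin d → O,
      (fun jj => φ ((∑ m, x m • b m) jj))
        = fun jj => ∑ m,
            (φ (x m) + ∑ m' ∈ Finset.univ.filter (m < ·), φ (x m') * μ m' m) * g m jj := by
    intro x
    funext jj
    have h1 : (∑ m, x m • b m) jj = ∑ m, (x m : K) * b m jj := by
      rw [Finset.sum_apply]
      exact Finset.sum_congr rfl fun m _ => rfl
    rw [h1, map_sum]
    simp only [map_mul]
    have h2 : ∀ m : Fin d, φ (b m jj)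
        = g m jj + ∑ i ∈ Finset.univ.filter (· < m), μ m i * g i jj :=
      fun m => congrFun (hdecomp m) jj
    calc ∑ m, φ (x m : K) * φ (b m jj)
        = ∑ m, (φ (x m) * g m jj
            + ∑ i ∈ Finset.univ.filter (· < m), φ (x m) * (μ m i * g i jj)) := by
          refine Finset.sum_congr rfl fun m _ => ?_
          rw [h2 m, mul_add, Finset.mul_sum]
      _ = (∑ m, φ (x m) * g m jj)
            + ∑ m, ∑ i ∈ Finset.univ.filter (· < m), φ (x m) * (μ m i * g i jj) :=
          Finset.sum_add_distrib
      _ = (∑ m, φ (x m) * g m jj)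
            + ∑ i, ∑ m ∈ Finset.univ.filter (i < ·), φ (x m) * (μ m i * g i jj) := by
          rw [hswap]
      _ = ∑ m, (φ (x m) + ∑ m' ∈ Finset.univ.filter (m < ·), φ (x m') * μ m' m) * g m jj := by
          rw [← Finset.sum_add_distrib]
          refine Finset.sum_congr rfl fun m _ => ?_
          rw [add_mul, Finset.sum_mul]
          congr 1
          exact Finset.sum_congr rfl fun m' _ => (mul_assoc _ _ _).symm
  -- Step A : each Gram–Schmidt vector is bounded by the corresponding minimum
  have hgA : ∀ i : Fin d, qV (g i) ≤ lam i ^ 2 := by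
    intro i
    obtain ⟨-, ⟨s, hsli, hsmem, hsbd⟩, -⟩ := hlam i
    have hcoef : ∀ j, ∃ x : Fin d → O, ∑ m, x m • b m = s j := by
      intro j
      have hmem : s j ∈ Submodule.span O (Set.range b) := by rw [hspan]; exact hsmem j
      exact (Submodule.mem_span_range_iff_exists_fun (R := O)).mp hmem
    choose x hx using hcoef
    have hex : ∃ j t, i ≤ t ∧ x j t ≠ 0 := by
      by_contra hcon
      push_neg at hcon
      set Wfin : Finset (Fin D → K) := (Finset.univ.filter (fun m : Fin d => m < i)).image b
        with hWfin
      have hmemW : ∀ j, s j ∈ Submodule.span K (Wfin : Set (Fin D → K)) := by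
        intro j
        rw [← hx j]
        refine Submodule.sum_mem _ fun m _ => ?_
        by_cases hm : m < i
        · have hbm : b m ∈ Submodule.span K (Wfin : Set (Fin D → K)) := by
            apply Submodule.subset_span
            exact Finset.mem_image.mpr ⟨m, Finset.mem_filter.mpr ⟨Finset.mem_univ m, hm⟩, rfl⟩
          have hsm : (x j m • b m : Fin D → K) = (x j m : K) • b m := rfl
          rw [hsm]
          exact Submodule.smul_mem _ _ hbm
        · have h0 : x j m = 0 := hcon j m (le_of_not_gt hm)
          rw [h0, zero_smul]
          exact Submodule.zero_mem _
      set W := Submodule.span K (Wfin : Set (Fin D → K)) with hW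
      have hcomp : W.subtype ∘ (fun j => (⟨s j, hmemW j⟩ : W)) = s := rfl
      have hli' : LinearIndependent K (fun j => (⟨s j, hmemW j⟩ : W)) :=
        LinearIndependent.of_comp W.subtype (by rw [hcomp]; exact hsli)
      have hcard : Fintype.card (Fin ((i : ℕ) + 1)) ≤ Module.finrank K W :=
        hli'.fintype_card_le_finrank
      have hfr : Module.finrank K W ≤ Wfin.card := by
        have := finrank_span_finset_le_card (R := K) Wfin
        simpa [Set.finrank, hW] using this
      have hW2 : Wfin.card ≤ (i : ℕ) := by
        refine (Finset.card_image_le).trans ?_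
        rw [hkcard i]
      rw [Fintype.card_fin] at hcard
      omega
    obtain ⟨j, t₀, ht₀i, ht₀ne⟩ := hex
    set S : Finset (Fin d) := Finset.univ.filter (fun m => x j m ≠ 0) with hS
    have hSne : S.Nonempty := ⟨t₀, by simp [hS, ht₀ne]⟩
    set t := S.max' hSne with ht
    have hxt : x j t ≠ 0 := by
      have := S.max'_mem hSne
      simpa [hS] using this
    have hti : i ≤ t := le_trans ht₀i (S.le_max' t₀ (by simp [hS, ht₀ne]))
    have hgt : ∀ m, t < m → x j m = 0 := by
      intro m hm
      by_contra h
      exact absurd (S.le_max' m (by simp [hS, h])) (not_le.mpr hm)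
    set c : Fin d → A :=
      fun m => φ (x j m) + ∑ m' ∈ Finset.univ.filter (m < ·), φ (x j m') * μ m' m with hc
    have hsjc : (fun jj => φ (s j jj)) = fun jj => ∑ m, c m * g m jj := by
      rw [← hx j]
      exact hcoord (x j)
    have hq : qV (fun jj => φ (s j jj)) = ∑ m, qV (fun jj => c m * g m jj) := by
      rw [hsjc]
      exact hpythagoras c
    have hct : c t = φ (x j t) := by
      have hz' : ∑ m' ∈ Finset.univ.filter (t < ·), φ ((x j m' : K)) * μ m' t = 0 := by
        refine Finset.sum_eq_zero fun m' hm' => ?_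
        have h0 : x j m' = 0 := hgt m' (by simpa using (Finset.mem_filter.mp hm').2)
        simp [h0]
      simp only [hc]
      rw [hz', add_zero]
    have h1 : qV (fun jj => c t * g t jj) ≤ lam i ^ 2 := by
      calc qV (fun jj => c t * g t jj)
          ≤ ∑ m, qV (fun jj => c m * g m jj) :=
            Finset.single_le_sum (f := fun m => qV (fun jj => c m * g m jj))
              (fun m _ => hqV0 _) (Finset.mem_univ t)
        _ = qV (fun jj => φ (s j jj)) := hq.symm
        _ ≤ lam i ^ 2 := hsbd j
    set x' : Fin d → O := fun m => if m = t then x j t else 0 with hx'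
    have hproj' := hproj i x' ⟨t, hti, by simp [hx', hxt]⟩
    have hsum' : (fun jj => ∑ m ∈ Finset.univ.filter (i ≤ ·), φ (x' m) * g m jj)
        = fun jj => c t * g t jj := by
      funext jj
      rw [hct]
      rw [Finset.sum_eq_single t]
      · simp [hx']
      · intro m _ hne
        simp [hx', hne]
      · intro h
        exact absurd (Finset.mem_filter.mpr ⟨Finset.mem_univ t, hti⟩) h
    calc qV (g i)
        ≤ qV (fun jj => ∑ m ∈ Finset.univ.filter (i ≤ ·), φ (x' m) * g m jj) := hproj'
      _ = qV (fun jj => c t * g t jj) := by rw [hsum']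
      _ ≤ lam i ^ 2 := h1
  -- Step B : monotonicity of the (squared) successive minima
  have hmono : ∀ i k : Fin d, i ≤ k → lam i ^ 2 ≤ lam k ^ 2 := by
    intro i k hik
    obtain ⟨-, ⟨s, hsli, hsmem, hsbd⟩, -⟩ := hlam k
    obtain ⟨-, -, hmin⟩ := hlam i
    have hle : (i : ℕ) + 1 ≤ (k : ℕ) + 1 := Nat.succ_le_succ hik
    have hli' : LinearIndependent K (s ∘ Fin.castLE hle) :=
      hsli.comp _ (Fin.castLE_injective hle)
    obtain ⟨j, hj⟩ := hmin (s ∘ Fin.castLE hle) hli' (fun j => hsmem _)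
    exact hj.trans (hsbd _)
  -- Step C : the main bound
  intro k
  set c : Fin d → A := fun m => if m = k then 1 else if m < k then μ k m else 0 with hc
  -- the decomposition of φ(b k) in terms of c
  have hbk : (fun jj => φ (b k jj)) = fun jj => ∑ m, c m * g m jj := by
    funext jj
    rw [congrFun (hdecomp k) jj]
    have hre : ∑ m, c m * g m jj
        = ∑ m, (if m = k then g k jj else if m < k then μ k m * g m jj else 0) := by
      refine Finset.sum_congr rfl fun m _ => ?_
      by_cases h1 : m = k
      · subst h1; simp [hc]
      · by_cases h3 : m < k <;> simp [hc, h1, h3]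
    rw [hre, ← Finset.add_sum_erase _ _ (Finset.mem_univ k)]
    congr 1
    · simp
    · have hre2 : ∑ m ∈ Finset.univ.erase k,
          (if m = k then g k jj else if m < k then μ k m * g m jj else 0)
          = ∑ m ∈ Finset.univ.erase k, (if m < k then μ k m * g m jj else 0) := by
        refine Finset.sum_congr rfl fun m hm => ?_
        rw [if_neg (Finset.mem_erase.mp hm).1]
      rw [hre2, ← Finset.sum_filter]
      have hfe : (Finset.univ.erase k).filter (fun m : Fin d => m < k)
          = Finset.univ.filter (· < k) := by
        ext m
        simp only [Finset.mem_filter, Finset.mem_erase, Finset.mem_univ, true_and, and_true]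
        constructor
        · rintro ⟨-, h⟩; exact h
        · intro h; exact ⟨ne_of_lt h, h⟩
      rw [hfe]
  -- vanishing of qV on the zero multiples (needed for indices above k)
  have hzero : ∀ m : Fin d, m ≠ k → qV (fun jj => (0 : A) * g m jj) = 0 := by
    intro m hmk
    have hp := hpythagoras (fun m' => if m' = k then 1 else 0)
    have hL : (fun jj => ∑ m', (if m' = k then (1 : A) else 0) * g m' jj) = g k := by
      funext jj
      rw [Finset.sum_eq_single k]
      · simp
      · intro m' _ hm'; simp [hm']
      · intro h; exact absurd (Finset.mem_univ k) h
    rw [hL, ← Finset.add_sum_erase _ _ (Finset.mem_univ k)] at hp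
    have hkterm : qV (fun jj => (if k = k then (1 : A) else 0) * g k jj) = qV (g k) := by
      congr 1
      funext jj
      simp
    rw [hkterm] at hp
    have hsum0 : ∑ m' ∈ Finset.univ.erase k,
        qV (fun jj => (if m' = k then (1 : A) else 0) * g m' jj) = 0 := by linarith
    have hall := (Finset.sum_eq_zero_iff_of_nonneg (fun m' _ => hqV0 _)).mp hsum0 m
      (Finset.mem_erase.mpr ⟨hmk, Finset.mem_univ m⟩)
    simpa only [if_neg hmk] using hall
  rw [hbk, hpythagoras c, ← Finset.add_sum_erase _ _ (Finset.mem_univ k)]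
  -- bound on each term with index ≠ k
  have hterm : ∀ m ∈ Finset.univ.erase k,
      qV (fun jj => c m * g m jj) ≤ if m < k then ρ * lam k ^ 2 else 0 := by
    intro m hm
    have hmk : m ≠ k := (Finset.mem_erase.mp hm).1
    by_cases hlt : m < k
    · rw [if_pos hlt]
      have hc' : c m = μ k m := by simp [hc, hmk, hlt]
      rw [hc']
      obtain ⟨y, hy⟩ := hρ (μ k m)
      have h1 : qS (μ k m) ≤ ρ := (hμred k m hlt y).trans hy
      calc qV (fun jj => μ k m * g m jj)
          ≤ qS (μ k m) * qV (g m) := hsubmul _ _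
        _ ≤ ρ * qV (g m) := mul_le_mul_of_nonneg_right h1 (hqV0 _)
        _ ≤ ρ * lam k ^ 2 :=
            mul_le_mul_of_nonneg_left ((hgA m).trans (hmono m k (le_of_lt hlt))) hρ0
    · rw [if_neg hlt]
      have hc' : c m = 0 := by simp [hc, hmk, hlt]
      rw [hc']
      exact le_of_eq (hzero m hmk)
  have hck : qV (fun jj => c k * g k jj) = qV (g k) := by
    congr 1
    funext jj
    simp [hc]
  have hsum2 : ∑ m ∈ Finset.univ.erase k, qV (fun jj => c m * g m jj)
      ≤ (k : ℝ) * (ρ * lam k ^ 2) := by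
    refine (Finset.sum_le_sum hterm).trans ?_
    rw [← Finset.sum_filter]
    have hfe : (Finset.univ.erase k).filter (fun m : Fin d => m < k)
        = Finset.univ.filter (· < k) := by
      ext m
      simp only [Finset.mem_filter, Finset.mem_erase, Finset.mem_univ, true_and, and_true]
      constructor
      · rintro ⟨-, h⟩; exact h
      · intro h; exact ⟨ne_of_lt h, h⟩
    rw [hfe, Finset.sum_const, hkcard k, nsmul_eq_mul]
  have hgk : qV (fun jj => c k * g k jj) ≤ lam k ^ 2 := by
    rw [hck]; exact hgA k
  calc qV (fun jj => c k * g k jj)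
        + ∑ m ∈ Finset.univ.erase k, qV (fun jj => c m * g m jj)
      ≤ lam k ^ 2 + (k : ℝ) * (ρ * lam k ^ 2) := add_le_add hgk hsum2
    _ = (1 + (k : ℝ) * ρ) * lam k ^ 2 := by ring
end
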